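/- Fix x > 0. For t > 0 let u*(x,t) := (2t/ξ²)·(b/(e^{bt} − 1) − a/x), and define the tilted probability measure Q_t on ℝ by dQ_t/dγ_t (z) = e^{u*(x,t) z / t} / ∫ e^{u*(x,t) w / t} γ_t(dw). Then, as t → 0⁺, ∫_{[x,∞)} exp(−(u*(x,t)/t)(z − x)) Q_t(dz) = O(t). -/

import Mathlib

/-!
With `θ_t = u*(x,t)/t` one computes `θ_t = λ_t - μ/x`, so tilting `Gamma(μ, λ_t)` by `e^{θ_t z}`
gives `Q_t = Gamma(μ, μ/x)` for every `t`. Since `log y ≤ y - 1`, on `[x, ∞)` the density of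
`Gamma(μ, c)` is at most its value at `x` times `e^{-(c - (μ-1)/x)(z-x)}`, so
the damped tail is at most that value divided by `θ_t + c - (μ-1)/x = λ_t - (μ-1)/x`. Finally
`1 - e^{bt} ≤ -bt` gives `λ_t ≥ 2/(ξ²t)`, hence `λ_t - (μ-1)/x ≥ 1/(ξ²t)` for small `t`.
-/

open Real MeasureTheory ProbabilityTheory Set
open scoped ENNReal

lemma rpow_le_rpow_mul_exp {p x z : ℝ} (hp : 0 ≤ p) (hx : 0 < x) (hz : 0 < z) :
    z ^ p ≤ x ^ p * exp (p / x * (z - x)) := by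
  have hzx : 0 < z / x := div_pos hz hx
  have hratio : (z / x) ^ p ≤ exp (p / x * (z - x)) := by
    rw [rpow_def_of_pos hzx, exp_le_exp]
    have hlog := log_le_sub_one_of_pos hzx
    calc log (z / x) * p ≤ (z / x - 1) * p := mul_le_mul_of_nonneg_right hlog hp
      _ = p / x * (z - x) := by field_simp
  calc z ^ p = x ^ p * (z / x) ^ p := by
        rw [div_rpow hz.le hx.le, mul_div_cancel₀ _ (rpow_pos_of_pos hx p).ne']
    _ ≤ x ^ p * exp (p / x * (z - x)) := by gcongr

lemma gammaPDFReal_le_mul_exp {α c x z : ℝ} (hα : 1 ≤ α) (hc : 0 ≤ c) (hx : 0 < x) (hz : 0 < z) :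
    gammaPDFReal α c z ≤ gammaPDFReal α c x * exp (-((c - (α - 1) / x) * (z - x))) := by
  have hexp : exp ((α - 1) / x * (z - x)) * exp (-(c * z))
      = exp (-(c * x)) * exp (-((c - (α - 1) / x) * (z - x))) := by
    rw [← exp_add, ← exp_add]; ring_nf
  simp only [gammaPDFReal, if_pos hz.le, if_pos hx.le]
  calc c ^ α / Gamma α * z ^ (α - 1) * exp (-(c * z))
      ≤ c ^ α / Gamma α * (x ^ (α - 1) * exp ((α - 1) / x * (z - x))) * exp (-(c * z)) := by
        gcongr
        exact rpow_le_rpow_mul_exp (by linarith) hx hz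
    _ = _ := by rw [mul_assoc, mul_assoc, hexp]; ring

lemma lintegral_Ici_exp_neg_mul_sub {m : ℝ} (hm : 0 < m) (x : ℝ) :
    ∫⁻ z in Ici x, ENNReal.ofReal (exp (-(m * (z - x)))) = ENNReal.ofReal (1 / m) := by
  have hsplit : ∀ z, exp (-(m * (z - x))) = exp (m * x) * exp (-m * z) := fun z => by
    rw [← exp_add]; ring_nf
  rw [← setLIntegral_congr Ioi_ae_eq_Ici, ← ofReal_integral_eq_lintegral_ofReal]
  · simp_rw [hsplit, integral_const_mul, integral_exp_mul_Ioi (neg_neg_of_pos hm)]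
    congr 1
    rw [neg_mul, exp_neg]
    field_simp
  · simp_rw [hsplit]
    exact (integrableOn_exp_mul_Ioi (neg_neg_of_pos hm) x).const_mul _
  · exact ae_of_all _ fun z => (exp_pos _).le

lemma gammaPDF_mul_exp {α r θ z : ℝ} (hα : 0 < α) (hr : 0 ≤ r) (hθ : θ < r) :
    gammaPDF α r z * ENNReal.ofReal (exp (θ * z))
      = ENNReal.ofReal ((r / (r - θ)) ^ α) * gammaPDF α (r - θ) z := by
  have hrθ : 0 < r - θ := sub_pos.2 hθ
  rcases lt_or_ge z 0 with hz | hz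
  · simp [gammaPDF_of_neg hz]
  rw [gammaPDF_of_nonneg hz, gammaPDF_of_nonneg hz, ← ENNReal.ofReal_mul (by positivity),
    ← ENNReal.ofReal_mul (by positivity)]
  congr 1
  have hexp : exp (-(r * z)) * exp (θ * z) = exp (-((r - θ) * z)) := by
    rw [← exp_add]; ring_nf
  rw [mul_assoc _ (exp _), hexp, div_rpow hr hrθ.le]
  field_simp [(rpow_pos_of_pos hrθ α).ne']

lemma measurable_gammaPDF (α r : ℝ) : Measurable (gammaPDF α r) :=
  (measurable_gammaPDFReal α r).ennreal_ofReal

lemma gammaMeasure_withDensity_exp {α r θ : ℝ} (hα : 0 < α) (hr : 0 ≤ r) (hθ : θ < r) :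
    (gammaMeasure α r).withDensity (fun z => ENNReal.ofReal (exp (θ * z)))
      = ENNReal.ofReal ((r / (r - θ)) ^ α) • gammaMeasure α (r - θ) := by
  rw [gammaMeasure, gammaMeasure, ← withDensity_mul _ (measurable_gammaPDF α r) (by fun_prop),
    ← withDensity_smul _ (measurable_gammaPDF α (r - θ))]
  congr 1
  funext z
  exact gammaPDF_mul_exp hα hr hθ

lemma lintegral_exp_mul_gammaMeasure {α r θ : ℝ} (hα : 0 < α) (hr : 0 ≤ r) (hθ : θ < r) :
    ∫⁻ z, ENNReal.ofReal (exp (θ * z)) ∂gammaMeasure α r = ENNReal.ofReal ((r / (r - θ)) ^ α) := by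
  have := isProbabilityMeasure_gammaMeasure hα (sub_pos.2 hθ)
  simpa using congrArg (· univ) (gammaMeasure_withDensity_exp hα hr hθ)

lemma gammaMeasure_withDensity_exp_div {α r θ : ℝ} (hα : 0 < α) (hr : 0 < r) (hθ : θ < r) :
    (gammaMeasure α r).withDensity (fun z => ENNReal.ofReal (exp (θ * z))
        / ∫⁻ w, ENNReal.ofReal (exp (θ * w)) ∂gammaMeasure α r) = gammaMeasure α (r - θ) := by
  rw [lintegral_exp_mul_gammaMeasure hα hr.le hθ]
  set Z := ENNReal.ofReal ((r / (r - θ)) ^ α)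
  have hZ0 : Z ≠ 0 :=
    ENNReal.ofReal_ne_zero_iff.2 (rpow_pos_of_pos (div_pos hr (sub_pos.2 hθ)) α)
  have hdensity : (fun z => ENNReal.ofReal (exp (θ * z)) / Z)
      = Z⁻¹ • fun z => ENNReal.ofReal (exp (θ * z)) := by
    funext z; exact ENNReal.div_eq_inv_mul
  rw [hdensity, withDensity_smul' _ _ (ENNReal.inv_ne_top.2 hZ0),
    gammaMeasure_withDensity_exp hα hr.le hθ, smul_smul,
    ENNReal.inv_mul_cancel hZ0 ENNReal.ofReal_ne_top, one_smul]

lemma setLIntegral_Ici_exp_gammaMeasure_le {α c s x : ℝ} (hα : 1 ≤ α) (hc : 0 < c) (hx : 0 < x)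
    (hs : (α - 1) / x < s + c) :
    ∫⁻ z in Ici x, ENNReal.ofReal (exp (-s * (z - x))) ∂gammaMeasure α c
      ≤ ENNReal.ofReal (gammaPDFReal α c x / (s + c - (α - 1) / x)) := by
  have hnonneg := gammaPDFReal_nonneg (zero_lt_one.trans_le hα) hc
  have hpointwise : ∀ z ∈ Ici x, (gammaPDF α c * fun z => ENNReal.ofReal (exp (-s * (z - x)))) z
      ≤ ENNReal.ofReal (gammaPDFReal α c x)
        * ENNReal.ofReal (exp (-((s + c - (α - 1) / x) * (z - x)))) := by
    intro z (hz : x ≤ z)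
    rw [Pi.mul_apply, gammaPDF, ← ENNReal.ofReal_mul (hnonneg z),
      ← ENNReal.ofReal_mul (hnonneg x)]
    apply ENNReal.ofReal_le_ofReal
    calc gammaPDFReal α c z * exp (-s * (z - x))
        ≤ gammaPDFReal α c x * exp (-((c - (α - 1) / x) * (z - x))) * exp (-s * (z - x)) := by
          gcongr
          exact gammaPDFReal_le_mul_exp hα hc.le hx (hx.trans_le hz)
      _ = gammaPDFReal α c x * exp (-((s + c - (α - 1) / x) * (z - x))) := by
          rw [mul_assoc, ← exp_add]; ring_nf
  rw [gammaMeasure, setLIntegral_withDensity_eq_setLIntegral_mul _ (measurable_gammaPDF α c)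
    (by fun_prop) measurableSet_Ici]
  calc _ ≤ ∫⁻ z in Ici x, ENNReal.ofReal (gammaPDFReal α c x)
          * ENNReal.ofReal (exp (-((s + c - (α - 1) / x) * (z - x)))) :=
        setLIntegral_mono (by fun_prop) hpointwise
    _ = _ := by
        rw [lintegral_const_mul _ (by fun_prop), lintegral_Ici_exp_neg_mul_sub (sub_pos.2 hs),
          ← ENNReal.ofReal_mul (hnonneg x), mul_one_div]

lemma setLIntegral_Ici_exp_gammaMeasure_le_mul {α c s x T : ℝ} (hα : 1 ≤ α) (hc : 0 < c)
    (hx : 0 < x) (hT : 0 < T) (hs : 1 / T ≤ s + c - (α - 1) / x) :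
    ∫⁻ z in Ici x, ENNReal.ofReal (exp (-s * (z - x))) ∂gammaMeasure α c
      ≤ ENNReal.ofReal (gammaPDFReal α c x * T) := by
  have hs_pos : 0 < s + c - (α - 1) / x := (one_div_pos.2 hT).trans_le hs
  refine (setLIntegral_Ici_exp_gammaMeasure_le hα hc hx (sub_pos.1 hs_pos)).trans
    (ENNReal.ofReal_le_ofReal ?_)
  rw [div_eq_mul_one_div]
  gcongr
  · exact gammaPDFReal_nonneg (zero_lt_one.trans_le hα) hc x
  · exact (one_div_le hs_pos hT).2 hs

lemma two_div_le_neg_two_mul_div_one_sub_exp {ξ b t : ℝ} (hξ : ξ ≠ 0) (hb : b < 0) (ht : 0 < t) :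
    2 / (ξ ^ 2 * t) ≤ -2 * b / (ξ ^ 2 * (1 - exp (b * t))) := by
  have hbt : b * t < 0 := mul_neg_of_neg_of_pos hb ht
  calc 2 / (ξ ^ 2 * t) = -2 * b / (ξ ^ 2 * -(b * t)) := by field_simp [hb.ne]
    _ ≤ -2 * b / (ξ ^ 2 * (1 - exp (b * t))) := by
        gcongr
        · linarith
        · exact mul_pos (by positivity) (by linarith [exp_lt_one_iff.2 hbt])
        · linarith [add_one_le_exp (b * t)]

theorem tilted_damped_tail_is_O_t_general
    (a ξ b : ℝ) (hξ : 0 < ξ) (hb : b < 0)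
    (μ : ℝ) (hμ_def : μ = 2 * a / ξ ^ 2) (hμ : 1 < μ)
    (lam : ℝ → ℝ) (hlam : ∀ t, lam t = -2 * b / (ξ ^ 2 * (1 - Real.exp (b * t))))
    (γ : ℝ → Measure ℝ)
    (hγ : ∀ t, 0 < t → γ t = ProbabilityTheory.gammaMeasure μ (lam t))
    (x : ℝ) (hx : 0 < x)
    (ustar : ℝ → ℝ)
    (hustar : ∀ t, ustar t = 2 * t / ξ ^ 2 * (b / (Real.exp (b * t) - 1) - a / x))
    (Q : ℝ → Measure ℝ)
    (hQ : ∀ t, 0 < t → Q t = (γ t).withDensity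
        (fun z => ENNReal.ofReal (Real.exp (ustar t * z / t))
          / ∫⁻ w, ENNReal.ofReal (Real.exp (ustar t * w / t)) ∂(γ t))) :
    ∃ C > (0 : ℝ), ∃ t₀ > (0 : ℝ), ∀ t, 0 < t → t < t₀ →
      (∫⁻ z in Set.Ici x, ENNReal.ofReal (Real.exp (-(ustar t / t) * (z - x))) ∂(Q t))
        ≤ ENNReal.ofReal (C * t) := by
  have hμ0 : 0 < μ := by linarith
  have hc : 0 < μ / x := div_pos hμ0 hx
  have hκ : 0 < (μ - 1) / x := div_pos (by linarith) hx
  refine ⟨gammaPDFReal μ (μ / x) x * ξ ^ 2, mul_pos (gammaPDFReal_pos hμ0 hc hx) (by positivity),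
    1 / ((μ - 1) / x) / ξ ^ 2, by positivity, fun t ht ht₀ => ?_⟩
  have hst : 0 < ξ ^ 2 * t := by positivity
  have hθ : ustar t / t = lam t - μ / x := by
    have hexp : exp (b * t) < 1 := exp_lt_one_iff.2 (mul_neg_of_neg_of_pos hb ht)
    rw [hustar, hlam, hμ_def, ← neg_sub 1 (exp (b * t)), div_neg]
    field_simp [(sub_pos.2 hexp).ne']
  have hlam_ge : 2 / (ξ ^ 2 * t) ≤ lam t :=
    hlam t ▸ two_div_le_neg_two_mul_div_one_sub_exp hξ.ne' hb ht
  have ht_small : (μ - 1) / x < 1 / (ξ ^ 2 * t) :=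
    (lt_one_div hκ hst).2 (mul_comm t (ξ ^ 2) ▸ (lt_div_iff₀ (by positivity)).1 ht₀)
  have hQt : Q t = gammaMeasure μ (μ / x) := by
    have hdensity : ∀ z, ustar t * z / t = (lam t - μ / x) * z := fun z => by
      rw [← hθ]; ring
    simp_rw [hQ t ht, hγ t ht, hdensity]
    have hlam_pos : 0 < lam t := (by positivity : (0 : ℝ) < 2 / (ξ ^ 2 * t)).trans_le hlam_ge
    convert gammaMeasure_withDensity_exp_div hμ0 hlam_pos (sub_lt_self _ hc) using 2
    ring
  rw [hQt, hθ, mul_assoc]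
  refine setLIntegral_Ici_exp_gammaMeasure_le_mul hμ.le hc hx hst ?_
  rw [sub_add_cancel]
  linarith [show 2 / (ξ ^ 2 * t) = 1 / (ξ ^ 2 * t) + 1 / (ξ ^ 2 * t) by ring]

/-- The damped tail functional under the tilted measure is `O(t)`: fixing `x > 0` and
tilting `γ_t` by `e^{u*(x,t)z/t}` (normalized), one has
`∫_{[x,∞)} exp(−(u*(x,t)/t)(z−x)) dQ_t = O(t)` as `t → 0⁺`. -/
theorem tilted_damped_tail_is_O_t
    (a ξ b : ℝ) (ha : 0 < a) (hξ : 0 < ξ) (hb : b < 0)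
    (μ : ℝ) (hμ_def : μ = 2 * a / ξ ^ 2) (hμ : 1 < μ)
    (lam : ℝ → ℝ) (hlam : ∀ t, lam t = -2 * b / (ξ ^ 2 * (1 - Real.exp (b * t))))
    (γ : ℝ → Measure ℝ)
    (hγ : ∀ t, 0 < t → γ t = ProbabilityTheory.gammaMeasure μ (lam t))
    (x : ℝ) (hx : 0 < x)
    (ustar : ℝ → ℝ)
    (hustar : ∀ t, ustar t = 2 * t / ξ ^ 2 * (b / (Real.exp (b * t) - 1) - a / x))
    (Q : ℝ → Measure ℝ)
    (hQ : ∀ t, 0 < t → Q t = (γ t).withDensity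
        (fun z => ENNReal.ofReal (Real.exp (ustar t * z / t))
          / ∫⁻ w, ENNReal.ofReal (Real.exp (ustar t * w / t)) ∂(γ t))) :
    ∃ C > (0 : ℝ), ∃ t₀ > (0 : ℝ), ∀ t, 0 < t → t < t₀ →
      (∫⁻ z in Set.Ici x, ENNReal.ofReal (Real.exp (-(ustar t / t) * (z - x))) ∂(Q t))
        ≤ ENNReal.ofReal (C * t) :=
  tilted_damped_tail_is_O_t_general a ξ b hξ hb μ hμ_def hμ lam hlam γ hγ x hx ustar hustar Q hQ
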